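/- Let J : ℝᵈ → ℝ be differentiable with L-Lipschitz gradient (L > 0), and suppose J(y) ≥ J(x) + ⟪∇J(x), y - x⟫ - (L/2)‖y - x‖² for all x, y. If λ > 0 satisfies λL ≤ 1/24, then for θ' = θ + λu we have J(θ') ≥ J(θ) + (11λ/24)‖∇J(θ)‖² - (13λ/24)‖∇J(θ) - u‖². -/

import Mathlib

theorem stmt_3 {E : Type*} [NormedAddCommGroup E] [InnerProductSpace ℝ E]
    (J : E → ℝ) (gradJ : E → E) (L lam : ℝ) (hL : 0 < L) (hlam : 0 < lam)
    (hdescent : ∀ x y : E, J y ≥ J x + (inner ℝ (gradJ x) (y - x) : ℝ) - L / 2 * ‖y - x‖ ^ 2)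
    (hstep : lam * L ≤ 1 / 24) (θ u : E) :
    J (θ + lam • u) ≥ J θ + (11 * lam / 24) * ‖gradJ θ‖ ^ 2
      - (13 * lam / 24) * ‖gradJ θ - u‖ ^ 2 := by
  have h := hdescent θ (θ + lam • u)
  rw [add_sub_cancel_left, real_inner_smul_right, norm_smul, Real.norm_eq_abs,
    abs_of_pos hlam] at h
  have hexp : ‖gradJ θ - u‖ ^ 2 = ‖gradJ θ‖ ^ 2 - 2 * inner ℝ (gradJ θ) u + ‖u‖ ^ 2 := by
    rw [norm_sub_sq_real]
  have hcs : (inner ℝ (gradJ θ) u : ℝ) ≤ ‖gradJ θ‖ * ‖u‖ := real_inner_le_norm _ _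
  nlinarith [sq_nonneg (‖gradJ θ‖ - ‖u‖), sq_nonneg (‖gradJ θ‖ + ‖u‖),
    mul_pos hlam hL, sq_nonneg ‖u‖, sq_nonneg ‖gradJ θ‖,
    mul_le_mul_of_nonneg_right hstep (sq_nonneg ‖u‖),
    mul_le_mul_of_nonneg_right hstep (sq_nonneg ‖gradJ θ‖)]
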